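/- Let f be a C^1 random dynamical system on T^2 over (Ω, F, P, T), and let c be an irrational real number such that for P-a.e. ω ∈ Ω and all x ∈ T^2 the column vector (c, 1)^T is fixed by the derivative: Df_ω(x) (c, 1)^T = (c, 1)^T. Then for P-a.e. ω the map f_ω is a translation of the torus: f_ω(x1, x2) = (x1 + α(ω), x2 + γ(ω)) for measurable functions α, γ : Ω → T. Consequently, for any τ > 0 the sequence n^{-τ} Df^n tends uniformly to zero. -/

import Mathlib

/-!
Put `v = (c, 1)`. The identity `Df v = v` integrates to `f (x + t v) = f x + t v`. If `N` is the
linear part of the lift, `x ↦ f x - N x` is `ℤ²`-periodic, hence bounded, yet it changes by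
`t (v - N v)` along `x + ℝ v`; so `N v = v`, and the irrationality of `c` forces `N = 1`. Then
`f - id` is `ℤ²`-periodic and constant along `v`, so on the horizontal axis it has the periods `1`
and `c`, which generate a dense subgroup of `ℝ`: it is constant and `f` is a translation. Iterates
of translations are translations, so `Df^n = 1`.
-/

open MeasureTheory Filter Topology Matrix

noncomputable section

/-- The circle `ℝ/ℤ`. -/
abbrev 𝕋 : Type := AddCircle (1 : ℝ)

/-- Projection of `ℝ^d` onto the torus `𝕋^d`. -/
def Tproj {d : ℕ} (x : Fin d → ℝ) : Fin d → 𝕋 := fun i => (x i : 𝕋)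

/-- The `d×d` matrix of partial derivatives of a map `F : ℝ^d → ℝ^d` at a point. -/
def Dmat {d : ℕ} (F : (Fin d → ℝ) → (Fin d → ℝ)) (x : Fin d → ℝ) :
    Matrix (Fin d) (Fin d) ℝ :=
  Matrix.of fun i j => fderiv ℝ (fun y => F y i) x (Pi.single j 1)

/-- The forward iterates `f^n_ω = f_{T^{n-1}ω} ∘ ⋯ ∘ f_{Tω} ∘ f_ω` of a random
dynamical system generated by `F` over `T`. -/
def RDSiter {Ω α : Type*} (T : Ω → Ω) (F : Ω → α → α) : ℕ → Ω → α → α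
  | 0 => fun _ x => x
  | n + 1 => fun ω x => RDSiter T F n (T ω) (F ω x)

theorem Irrational.eq_zero_of_intCast_mul_add_intCast_eq_zero {c : ℝ} (hc : Irrational c)
    {a b : ℤ} (h : a * c + b = 0) : a = 0 ∧ b = 0 := by
  have ha : a = 0 := by
    by_contra ha
    exact ((hc.intCast_mul ha).add_intCast b).ne_zero h
  subst ha
  simpa using h

theorem Function.Periodic.eq_apply_zero_of_irrational {E : Type*} [TopologicalSpace E]
    [T2Space E] {h : ℝ → E} (hh : Continuous h) {c : ℝ} (hc : Irrational c)
    (hc_per : Function.Periodic h c) (h1_per : Function.Periodic h 1) (s : ℝ) :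
    h s = h 0 := by
  have hdense : Dense (AddSubgroup.closure {c, 1} : Set ℝ) :=
    dense_addSubgroupClosure_pair_iff.2 (by simpa using hc)
  have hperiods : (AddSubgroup.closure {c, 1} : Set ℝ) ⊆ {s | h s = h 0} := by
    intro s hs
    obtain ⟨m, n, rfl⟩ := AddSubgroup.mem_closure_pair.1 hs
    exact ((hc_per.zsmul m).add_period (h1_per.zsmul n)).eq
  have hclosed : IsClosed {s | h s = h 0} := isClosed_eq hh continuous_const
  exact hclosed.closure_subset_iff.2 hperiods (hdense.closure_eq ▸ Set.mem_univ s)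

theorem apply_add_smul_of_fderiv_apply_eq {E F : Type*} [NormedAddCommGroup E]
    [NormedSpace ℝ E] [NormedAddCommGroup F] [NormedSpace ℝ F] {f : E → F}
    (hf : Differentiable ℝ f) {v : E} {w : F} (hv : ∀ x, fderiv ℝ f x v = w) (x : E) (t : ℝ) :
    f (x + t • v) = f x + t • w := by
  have hderiv : ∀ s, HasDerivAt (fun s : ℝ => f (x + s • v) - s • w) 0 s := by
    intro s
    have hline : HasDerivAt (fun s : ℝ => x + s • v) v s := by
      simpa using ((hasDerivAt_id s).smul_const v).const_add x
    have h := ((hf _).hasFDerivAt.comp_hasDerivAt s hline).sub ((hasDerivAt_id s).smul_const w)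
    rwa [hv, one_smul, sub_self] at h
  have := is_const_of_deriv_eq_zero (fun s => (hderiv s).differentiableAt)
    (fun s => (hderiv s).deriv) t 0
  simp only [zero_smul, add_zero, sub_zero] at this
  rw [← this, sub_add_cancel]

theorem exists_norm_le_of_intPeriodic {d : ℕ} {E : Type*} [NormedAddCommGroup E]
    {G : (Fin d → ℝ) → E} (hG : Continuous G)
    (hper : ∀ (x : Fin d → ℝ) (m : Fin d → ℤ), G (x + fun i => (m i : ℝ)) = G x) :
    ∃ C, ∀ x, ‖G x‖ ≤ C := by
  obtain ⟨C, hC⟩ := (isCompact_univ_pi fun _ => isCompact_Icc).exists_bound_of_continuousOn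
    (f := G) (s := Set.univ.pi fun _ : Fin d => Set.Icc (0 : ℝ) 1) hG.continuousOn
  refine ⟨C, fun x => ?_⟩
  have hfract : (fun i => Int.fract (x i)) ∈ Set.univ.pi fun _ : Fin d => Set.Icc (0 : ℝ) 1 :=
    fun i _ => ⟨Int.fract_nonneg _, (Int.fract_lt_one _).le⟩
  have hx : x = (fun i => Int.fract (x i)) + fun i => ((⌊x i⌋ : ℤ) : ℝ) := by
    funext i; simp
  rw [hx, hper]
  exact hC _ hfract

theorem eq_zero_of_forall_norm_smul_le {E : Type*} [NormedAddCommGroup E] [NormedSpace ℝ E]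
    {w : E} {C : ℝ} (h : ∀ t : ℝ, ‖t • w‖ ≤ C) : w = 0 := by
  by_contra hw
  have hC : 0 ≤ C := by simpa using h 0
  have hw' : 0 < ‖w‖ := norm_pos_iff.2 hw
  have := h ((C + 1) / ‖w‖)
  rw [norm_smul, Real.norm_eq_abs, abs_of_pos (by positivity), div_mul_cancel₀ _ hw'.ne'] at this
  linarith

theorem Dmat_eq_toMatrix' {d : ℕ} {F : (Fin d → ℝ) → (Fin d → ℝ)} {x : Fin d → ℝ}
    (hF : DifferentiableAt ℝ F x) :
    Dmat F x = LinearMap.toMatrix' (fderiv ℝ F x : (Fin d → ℝ) →ₗ[ℝ] Fin d → ℝ) := by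
  ext i j
  simp [Dmat, LinearMap.toMatrix'_apply, fderiv_apply hF i]

theorem Dmat_mulVec {d : ℕ} {F : (Fin d → ℝ) → (Fin d → ℝ)} {x : Fin d → ℝ}
    (hF : DifferentiableAt ℝ F x) (w : Fin d → ℝ) : Dmat F x *ᵥ w = fderiv ℝ F x w := by
  rw [Dmat_eq_toMatrix' hF, LinearMap.toMatrix'_mulVec]
  rfl

theorem Dmat_add_const {d : ℕ} (b x : Fin d → ℝ) : Dmat (fun y => y + b) x = 1 := by
  have hd : DifferentiableAt ℝ (fun y : Fin d → ℝ => y + b) x := by fun_prop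
  rw [Dmat_eq_toMatrix' hd, fderiv_add_const, fderiv_fun_id]
  exact LinearMap.toMatrix'_id

theorem Matrix.eq_one_of_map_mulVec_eq_self {c : ℝ} (hc : Irrational c)
    {N : Matrix (Fin 2) (Fin 2) ℤ} (hN : N.map (Int.cast : ℤ → ℝ) *ᵥ ![c, 1] = ![c, 1]) :
    N = 1 := by
  have h0 := congrFun hN 0
  have h1 := congrFun hN 1
  simp only [mulVec, dotProduct, Fin.sum_univ_two, map_apply] at h0 h1
  simp only [cons_val_zero, cons_val_one, mul_one] at h0 h1
  obtain ⟨h00, h01⟩ := hc.eq_zero_of_intCast_mul_add_intCast_eq_zero (a := N 0 0 - 1) (b := N 0 1)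
    (by push_cast; linarith)
  obtain ⟨h10, h11⟩ := hc.eq_zero_of_intCast_mul_add_intCast_eq_zero (a := N 1 0) (b := N 1 1 - 1)
    (by push_cast; linarith)
  ext i j
  fin_cases i <;> fin_cases j <;> simp <;> omega

theorem map_mulVec_eq_self_of_apply_add_smul {d : ℕ} {f : (Fin d → ℝ) → (Fin d → ℝ)}
    (hf : Continuous f) {N : Matrix (Fin d) (Fin d) ℤ}
    (hper : ∀ (x : Fin d → ℝ) (m : Fin d → ℤ),
      f (x + fun i => (m i : ℝ)) = f x + fun i => ((N *ᵥ m) i : ℝ))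
    {v : Fin d → ℝ} (hv : ∀ t : ℝ, f (t • v) = f 0 + t • v) :
    N.map (Int.cast : ℤ → ℝ) *ᵥ v = v := by
  set A := N.map (Int.cast : ℤ → ℝ)
  have hcast : ∀ m : Fin d → ℤ, (fun i => ((N *ᵥ m) i : ℝ)) = A *ᵥ fun i => (m i : ℝ) :=
    fun m => funext (RingHom.map_mulVec (Int.castRingHom ℝ) N m)
  obtain ⟨C, hC⟩ := exists_norm_le_of_intPeriodic (G := fun x => f x - A *ᵥ x)
    (hf.sub (Continuous.matrix_mulVec continuous_const continuous_id))
    (fun x m => by simp only [hper, hcast, mulVec_add]; abel)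
  refine (sub_eq_zero.1 (eq_zero_of_forall_norm_smul_le (C := 2 * C) fun t => ?_)).symm
  have hsplit : t • (v - A *ᵥ v) = (f (t • v) - A *ᵥ (t • v)) - (f 0 - A *ᵥ 0) := by
    rw [hv, mulVec_smul, mulVec_zero, smul_sub]
    abel
  rw [hsplit]
  linarith [norm_sub_le (f (t • v) - A *ᵥ (t • v)) (f 0 - A *ᵥ 0), hC (t • v), hC 0]

theorem eq_apply_zero_of_intPeriodic_of_irrational {E : Type*} [TopologicalSpace E] [T2Space E]
    {g : (Fin 2 → ℝ) → E} (hg : Continuous g) {c : ℝ} (hc : Irrational c)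
    (hper : ∀ (x : Fin 2 → ℝ) (m : Fin 2 → ℤ), g (x + fun i => (m i : ℝ)) = g x)
    (hinv : ∀ (x : Fin 2 → ℝ) (t : ℝ), g (x + t • ![c, 1]) = g x) (x : Fin 2 → ℝ) :
    g x = g 0 := by
  set h : ℝ → E := fun s => g ![s, 0]
  have h1_per : Function.Periodic h 1 := fun s => by
    have hs : (![s + 1, 0] : Fin 2 → ℝ) = ![s, 0] + fun i => ((![1, 0] : Fin 2 → ℤ) i : ℝ) := by
      ext i; fin_cases i <;> simp
    simp only [h, hs, hper]
  have hc_per : Function.Periodic h c := fun s => by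
    have hs : (![s + c, 0] : Fin 2 → ℝ) =
        (![s, 0] + (1 : ℝ) • ![c, 1]) + fun i => ((![0, -1] : Fin 2 → ℤ) i : ℝ) := by
      ext i; fin_cases i <;> simp
    simp only [h, hs, hper, hinv]
  have hx : x = ![x 0 - x 1 * c, 0] + x 1 • ![c, 1] := by
    ext i; fin_cases i <;> simp
  have h0 : (0 : Fin 2 → ℝ) = ![0, 0] := by
    ext i; fin_cases i <;> rfl
  rw [hx, hinv, h0]
  exact hc_per.eq_apply_zero_of_irrational (hg.comp (by fun_prop)) hc h1_per _

theorem eq_add_apply_zero_of_Dmat_mulVec_eq {f : (Fin 2 → ℝ) → (Fin 2 → ℝ)}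
    (hf : Differentiable ℝ f) {N : Matrix (Fin 2) (Fin 2) ℤ}
    (hper : ∀ (x : Fin 2 → ℝ) (m : Fin 2 → ℤ),
      f (x + fun i => (m i : ℝ)) = f x + fun i => ((N *ᵥ m) i : ℝ))
    {c : ℝ} (hc : Irrational c) (hfix : ∀ x, Dmat f x *ᵥ ![c, 1] = ![c, 1]) (x : Fin 2 → ℝ) :
    f x = x + f 0 := by
  have hline : ∀ (x : Fin 2 → ℝ) (t : ℝ), f (x + t • ![c, 1]) = f x + t • ![c, 1] :=
    apply_add_smul_of_fderiv_apply_eq hf fun x => by rw [← Dmat_mulVec (hf x), hfix]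
  obtain rfl : N = 1 := Matrix.eq_one_of_map_mulVec_eq_self hc
    (map_mulVec_eq_self_of_apply_add_smul hf.continuous hper fun t => by simpa using hline 0 t)
  have hconst := eq_apply_zero_of_intPeriodic_of_irrational (g := fun x => f x - x)
    (hf.continuous.sub continuous_id) hc
    (fun x m => by simp only [hper, one_mulVec]; abel)
    (fun x t => by simp only [hline]; abel) x
  rw [← sub_eq_iff_eq_add', hconst, sub_zero]

theorem Tproj_add {d : ℕ} (x y : Fin d → ℝ) : Tproj (x + y) = Tproj x + Tproj y := by
  funext i
  exact AddCircle.coe_add (p := 1) (x i) (y i)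

theorem RDSiter_apply_eq_add {Ω α : Type*} [AddMonoid α] {T : Ω → Ω} {F : Ω → α → α} {ω : Ω}
    (hF : ∀ (k : ℕ) (x : α), F (T^[k] ω) x = x + F (T^[k] ω) 0) (n : ℕ) (x : α) :
    RDSiter T F n ω x = x + RDSiter T F n ω 0 := by
  induction n generalizing ω x with
  | zero => simp [RDSiter]
  | succ n ih =>
    have hF' : ∀ (k : ℕ) (x : α), F (T^[k] (T ω)) x = x + F (T^[k] (T ω)) 0 := fun k =>
      hF (k + 1)
    simp only [RDSiter]
    rw [show F ω x = x + F ω 0 from hF 0 x, ih hF', ih hF' (F ω 0), add_assoc]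

theorem sum_sum_abs_smul_one {d : ℕ} (r : ℝ) :
    ∑ i, ∑ j, |(r • (1 : Matrix (Fin d) (Fin d) ℝ)) i j| = d * |r| := by
  simp [Matrix.one_apply, apply_ite]

theorem stmt_5_general
    {Ω : Type*} [MeasurableSpace Ω]
    (P : Measure Ω)
    (T : Ω → Ω) (hT : Ergodic T P)
    (FL : Ω → (Fin 2 → ℝ) → (Fin 2 → ℝ))
    (fT : Ω → (Fin 2 → 𝕋) → (Fin 2 → 𝕋))
    (hFLmeas : Measurable (Function.uncurry FL))
    (hFL : ∀ ω, ContDiff ℝ 1 (FL ω))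
    (N : Ω → Matrix (Fin 2) (Fin 2) ℤ)
    (hper : ∀ ω (x : Fin 2 → ℝ) (m : Fin 2 → ℤ),
      FL ω (x + fun i => (m i : ℝ)) = FL ω x + fun i => ((N ω *ᵥ m) i : ℝ))
    (hlift : ∀ ω x, fT ω (Tproj x) = Tproj (FL ω x))
    (c : ℝ) (hc : Irrational c)
    (hfix : ∀ᵐ ω ∂P, ∀ x : Fin 2 → ℝ, Dmat (FL ω) x *ᵥ ![c, 1] = ![c, 1]) :
    -- P-a.e. the lift is an exact translation of ℝ²
    (∀ᵐ ω ∂P, ∀ x : Fin 2 → ℝ, FL ω x = x + FL ω 0) ∧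
    -- P-a.e. f_ω is a translation of the torus, with measurable α, γ : Ω → 𝕋
    (∃ a g : Ω → 𝕋, Measurable a ∧ Measurable g ∧
      ∀ᵐ ω ∂P, ∀ x : Fin 2 → ℝ,
        fT ω (Tproj x) = ![((x 0 : ℝ) : 𝕋) + a ω, ((x 1 : ℝ) : 𝕋) + g ω]) ∧
    -- consequently n^{-τ} Df^n tends uniformly (in (ω,x), a.e. in ω) to zero
    (∀ τ : ℝ, 0 < τ → ∀ ε : ℝ, 0 < ε → ∃ n₀ : ℕ, ∀ n ≥ n₀, ∀ᵐ ω ∂P,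
      ∀ x : Fin 2 → ℝ,
        (∑ i, ∑ j, |(((n : ℝ) ^ τ)⁻¹ • Dmat (RDSiter T FL n ω) x) i j|) < ε) := by
  have htrans : ∀ᵐ ω ∂P, ∀ x : Fin 2 → ℝ, FL ω x = x + FL ω 0 := by
    filter_upwards [hfix] with ω hω
    exact eq_add_apply_zero_of_Dmat_mulVec_eq ((hFL ω).differentiable one_ne_zero) (hper ω) hc hω
  have hshift : Measurable fun ω => FL ω 0 := hFLmeas.comp (measurable_id.prodMk measurable_const)
  refine ⟨htrans, ⟨fun ω => (FL ω 0 0 : 𝕋), fun ω => (FL ω 0 1 : 𝕋), ?_, ?_, ?_⟩, ?_⟩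
  · exact (AddCircle.continuous_mk' 1).measurable.comp ((measurable_pi_apply 0).comp hshift)
  · exact (AddCircle.continuous_mk' 1).measurable.comp ((measurable_pi_apply 1).comp hshift)
  · filter_upwards [htrans] with ω hω x
    rw [hlift, hω, Tproj_add]
    ext i; fin_cases i <;> rfl
  · intro τ hτ ε hε
    have hdecay : Tendsto (fun n : ℕ => 2 * |((n : ℝ) ^ τ)⁻¹|) atTop (𝓝 0) := by
      simpa using (((tendsto_rpow_atTop hτ).comp
        tendsto_natCast_atTop_atTop).inv_tendsto_atTop.abs.const_mul 2)
    obtain ⟨n₀, hn₀⟩ := eventually_atTop.1 (hdecay.eventually (gt_mem_nhds hε))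
    refine ⟨n₀, fun n hn => ?_⟩
    have hiterates : ∀ᵐ ω ∂P, ∀ (k : ℕ) (x : Fin 2 → ℝ), FL (T^[k] ω) x = x + FL (T^[k] ω) 0 :=
      ae_all_iff.2 fun k => (hT.toMeasurePreserving.iterate k).quasiMeasurePreserving.ae htrans
    filter_upwards [hiterates] with ω hω x
    rw [funext (RDSiter_apply_eq_add hω n), Dmat_add_const, sum_sum_abs_smul_one]
    simpa using hn₀ n hn

/-- Let `f` be a `C¹` random dynamical system on `𝕋²` over an
ergodic automorphism `T` of a Lebesgue probability space, and let `c` be irrational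
such that for `P`-a.e. `ω` and all `x` the vector `(c,1)ᵀ` is fixed by `Df_ω(x)`.
Then for `P`-a.e. `ω` the map `f_ω` is a translation of the torus,
`f_ω(x₁,x₂) = (x₁+α(ω), x₂+γ(ω))` with `α, γ : Ω → 𝕋` measurable; consequently for
every `τ > 0` the sequence `n^{-τ} Df^n` tends uniformly to zero. -/
theorem stmt_5
    {Ω : Type*} [MeasurableSpace Ω] [StandardBorelSpace Ω]
    (P : Measure Ω) [IsProbabilityMeasure P]
    (T : Ω → Ω) (hT : Ergodic T P)
    (FL : Ω → (Fin 2 → ℝ) → (Fin 2 → ℝ))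
    (fT : Ω → (Fin 2 → 𝕋) → (Fin 2 → 𝕋))
    (hFLmeas : Measurable (Function.uncurry FL))
    (hFL : ∀ ω, ContDiff ℝ 1 (FL ω))
    (N : Ω → Matrix (Fin 2) (Fin 2) ℤ) (hNdet : ∀ ω, IsUnit (N ω).det)
    (hper : ∀ ω (x : Fin 2 → ℝ) (m : Fin 2 → ℤ),
      FL ω (x + fun i => (m i : ℝ)) = FL ω x + fun i => ((N ω *ᵥ m) i : ℝ))
    (hlift : ∀ ω x, fT ω (Tproj x) = Tproj (FL ω x))
    (hbij : ∀ ω, Function.Bijective (fT ω))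
    (c : ℝ) (hc : Irrational c)
    (hfix : ∀ᵐ ω ∂P, ∀ x : Fin 2 → ℝ, Dmat (FL ω) x *ᵥ ![c, 1] = ![c, 1]) :
    -- P-a.e. the lift is an exact translation of ℝ²
    (∀ᵐ ω ∂P, ∀ x : Fin 2 → ℝ, FL ω x = x + FL ω 0) ∧
    -- P-a.e. f_ω is a translation of the torus, with measurable α, γ : Ω → 𝕋
    (∃ a g : Ω → 𝕋, Measurable a ∧ Measurable g ∧
      ∀ᵐ ω ∂P, ∀ x : Fin 2 → ℝ,
        fT ω (Tproj x) = ![((x 0 : ℝ) : 𝕋) + a ω, ((x 1 : ℝ) : 𝕋) + g ω]) ∧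
    -- consequently n^{-τ} Df^n tends uniformly (in (ω,x), a.e. in ω) to zero
    (∀ τ : ℝ, 0 < τ → ∀ ε : ℝ, 0 < ε → ∃ n₀ : ℕ, ∀ n ≥ n₀, ∀ᵐ ω ∂P,
      ∀ x : Fin 2 → ℝ,
        (∑ i, ∑ j, |(((n : ℝ) ^ τ)⁻¹ • Dmat (RDSiter T FL n ω) x) i j|) < ε) :=
  stmt_5_general P T hT FL fT hFLmeas hFL N hper hlift c hc hfix

end
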